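/- If k > n² − n and k is not an integral multiple of n, then R*(k) ≤ R*(n+1). -/

import Mathlib

/-!
A walk `W` with `n + 1` visits to `n` targets visits one target twice per period, at positions
`a < r ≤ n`, and every other target once. Write `k = n p + q` with `q ≤ p`, which
`k > n² - n` allows. Repeating `W` for `p` periods and dropping the visit at position `r` in
`p - q` of them leaves exactly `k` visits. The shortcut `r - 1 → r + 1` is legal, since
`W.seq (r - 1) = W.seq (r + 1)` would make a second target repeat, and by the triangle inequality
it is no longer than the detour. Every target still occurs at a kept position in every window of
one period of `W`, so the new walk revisits each target within the duration of `W`; and this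
duration is the revisit time in `W` of a target that `W` visits only once.

For `n = 2` every walk alternates, so an odd `k` admits no walk and `Rstar n c k = sInf ∅ = 0`;
for `n ≥ 3` walks with `n + 1` visits exist.
-/

/-- A closed walk with `k` visits on `n` targets, modeled as a `k`-periodic
sequence of targets in which consecutive visits are distinct and every
target is visited at least once in each period. -/
structure CWalk (n k : ℕ) where
  seq : ℕ → Fin n
  periodic : ∀ i, seq (i + k) = seq i
  step : ∀ i, seq i ≠ seq (i + 1)
  covers : ∀ d : Fin n, ∃ i < k, seq i = d

namespace CWalk

/-- Travel time from the `i`-th to the `j`-th visit. -/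
noncomputable def tt {n k : ℕ} (c : Fin n → Fin n → ℝ) (W : CWalk n k) (i j : ℕ) : ℝ :=
  ∑ t ∈ Finset.Ico i j, c (W.seq t) (W.seq (t + 1))

/-- Duration of one period of the walk. -/
noncomputable def duration {n k : ℕ} (c : Fin n → Fin n → ℝ) (W : CWalk n k) : ℝ :=
  W.tt c 0 k

/-- Revisit time of target `d`: the maximum time between consecutive visits to `d`. -/
noncomputable def RT {n k : ℕ} (c : Fin n → Fin n → ℝ) (W : CWalk n k) (d : Fin n) : ℝ :=
  sSup {T : ℝ | ∃ i j : ℕ, i < j ∧ W.seq i = d ∧ W.seq j = d ∧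
    (∀ t, i < t → t < j → W.seq t ≠ d) ∧ T = W.tt c i j}

/-- Revisit time of the walk: maximum revisit time over all targets. -/
noncomputable def R {n k : ℕ} (c : Fin n → Fin n → ℝ) (W : CWalk n k) : ℝ :=
  sSup {T : ℝ | ∃ d : Fin n, T = W.RT c d}

end CWalk

/-- Optimal revisit time over all closed walks with `k` visits. -/
noncomputable def Rstar (n : ℕ) (c : Fin n → Fin n → ℝ) (k : ℕ) : ℝ :=
  sInf {T : ℝ | ∃ W : CWalk n k, T = W.R c}

/-- Optimal TSP tour length: minimal duration of a closed walk with `n` visits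
(each target is then visited exactly once). -/
noncomputable def TSPstar (n : ℕ) (c : Fin n → Fin n → ℝ) : ℝ :=
  sInf {T : ℝ | ∃ W : CWalk n n, T = W.duration c}

open Finset Function

noncomputable def pathLength {α : Type*} (c : α → α → ℝ) (v : ℕ → α) (i j : ℕ) : ℝ :=
  ∑ t ∈ Ico i j, c (v t) (v (t + 1))

section PathLength

variable {α : Type*} {c : α → α → ℝ} {v : ℕ → α}

@[simp]
lemma pathLength_self (i : ℕ) : pathLength c v i i = 0 := by
  simp [pathLength]

lemma pathLength_add {i j l : ℕ} (hij : i ≤ j) (hjl : j ≤ l) :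
    pathLength c v i j + pathLength c v j l = pathLength c v i l :=
  sum_Ico_consecutive _ hij hjl

lemma pathLength_succ_right {i j : ℕ} (hij : i ≤ j) :
    pathLength c v i (j + 1) = pathLength c v i j + c (v j) (v (j + 1)) :=
  sum_Ico_succ_top hij _

lemma pathLength_mono_right (hnn : ∀ t, 0 ≤ c (v t) (v (t + 1))) {i j l : ℕ} (hjl : j ≤ l) :
    pathLength c v i j ≤ pathLength c v i l :=
  sum_le_sum_of_subset_of_nonneg (Ico_subset_Ico_right hjl) fun t _ _ => hnn t

lemma pathLength_add_period {P : ℕ} (hv : Periodic v P) (m : ℕ) :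
    pathLength c v m (m + P) = pathLength c v 0 P := by
  induction m with
  | zero => simp
  | succ m ih =>
    have h := (pathLength_add (c := c) (v := v) (Nat.le_succ m)
      (by omega : m + 1 ≤ m + P + 1)).trans
      (pathLength_add (Nat.le_add_right m P) (m + P).le_succ).symm
    rw [pathLength_succ_right le_rfl, pathLength_succ_right le_rfl, hv,
      show m + P + 1 = m + 1 + P by omega, hv (m + 1)] at h
    simp only [pathLength_self, zero_add] at h
    linarith

lemma le_pathLength (htri : ∀ x y z, c x z ≤ c x y + c y z) {i j : ℕ} (hij : i < j) :
    c (v i) (v j) ≤ pathLength c v i j := by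
  induction j, hij using Nat.le_induction with
  | base => simp [pathLength]
  | succ j hij ih =>
    rw [pathLength_succ_right (Nat.le_of_succ_le hij)]
    exact (htri _ (v j) _).trans (by linarith)

lemma pathLength_comp_le (htri : ∀ x y z, c x z ≤ c x y + c y z) {φ : ℕ → ℕ}
    (hφ : StrictMono φ) {i j : ℕ} (hij : i ≤ j) :
    pathLength c (v ∘ φ) i j ≤ pathLength c v (φ i) (φ j) := by
  induction j, hij using Nat.le_induction with
  | base => simp [pathLength]
  | succ j hij ih =>
    rw [pathLength_succ_right hij, ← pathLength_add (hφ.monotone hij) (hφ.monotone j.le_succ)]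
    exact add_le_add ih (le_pathLength htri (hφ j.lt_succ_self))

end PathLength

lemma Nat.count_add_count_not (p : ℕ → Prop) [DecidablePred p] (n : ℕ) :
    Nat.count p n + Nat.count (fun u => ¬ p u) n = n := by
  induction n with
  | zero => simp
  | succ n ih => simp only [Nat.count_succ]; split_ifs <;> omega

/-- Positions, in `p` repetitions of a walk of period `P`, whose visit is shortcut: position `r` of
each of the first `s` periods, repeated with period `p * P`. -/
def Skipped (P r s p u : ℕ) : Prop := u ≡ r [MOD P] ∧ u % (p * P) < s * P

instance (P r s p : ℕ) : DecidablePred (Skipped P r s p) :=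
  fun _ => inferInstanceAs (Decidable (_ ∧ _))

noncomputable def kept (P r s p : ℕ) : ℕ → ℕ := Nat.nth (¬ Skipped P r s p ·)

section Skipped

variable {P r s p : ℕ}

lemma skipped_add_period_iff (u : ℕ) : Skipped P r s p (u + p * P) ↔ Skipped P r s p u := by
  simp only [Skipped, Nat.ModEq, Nat.add_mul_mod_self_right, Nat.add_mod_right]

lemma Skipped.not_succ (hP : 1 < P) {u : ℕ} (hu : Skipped P r s p u) :
    ¬ Skipped P r s p (u + 1) := fun hu' => by
  have h : 0 + u ≡ 1 + u [MOD P] := by rw [zero_add, add_comm]; exact hu.1.trans hu'.1.symm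
  have := Nat.ModEq.add_right_cancel' u h
  rw [Nat.ModEq, Nat.zero_mod, Nat.one_mod_eq_one.2 hP.ne'] at this
  omega

lemma count_skipped_period (hP : 0 < P) (hs : s ≤ p) :
    Nat.count (Skipped P r s p) (p * P) = s := by
  have hsplit : p * P = s * P + (p - s) * P := by rw [← add_mul, Nat.add_sub_cancel' hs]
  have hlow : Nat.count (Skipped P r s p) (s * P) = Nat.count (· ≡ r [MOD P]) (s * P) := by
    simp only [Nat.count_eq_card_filter_range]
    congr 1
    refine filter_congr fun u hu => ?_
    have hu : u < s * P := mem_range.1 hu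
    have : u < p * P := by nlinarith
    simp [Skipped, Nat.mod_eq_of_lt this, hu]
  have hhigh : Nat.count (fun j => Skipped P r s p (s * P + j)) ((p - s) * P) = 0 :=
    Nat.count_iff_forall_not.2 fun j hj ⟨_, h⟩ => by
      rw [Nat.mod_eq_of_lt (by omega)] at h
      omega
  rw [hsplit, Nat.count_add, hhigh, hlow, Nat.count_modEq_card _ hP]
  simp [Nat.mul_div_cancel _ hP]

lemma infinite_setOf_not_skipped (hP : 1 < P) : (Set.ofPred (¬ Skipped P r s p ·)).Infinite :=
  Set.infinite_of_forall_exists_gt fun a => by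
    by_cases h : Skipped P r s p (a + 1)
    · exact ⟨a + 2, h.not_succ hP, by omega⟩
    · exact ⟨a + 1, h, by omega⟩

lemma kept_strictMono (hP : 1 < P) : StrictMono (kept P r s p) :=
  Nat.nth_strictMono (infinite_setOf_not_skipped hP)

lemma not_skipped_kept (hP : 1 < P) (i : ℕ) : ¬ Skipped P r s p (kept P r s p i) :=
  Nat.nth_mem_of_infinite (infinite_setOf_not_skipped hP) i

lemma count_kept (hP : 1 < P) (i : ℕ) : Nat.count (¬ Skipped P r s p ·) (kept P r s p i) = i :=
  Nat.count_nth_of_infinite (infinite_setOf_not_skipped hP) i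

lemma kept_succ (hP : 1 < P) (i : ℕ) :
    kept P r s p (i + 1) = kept P r s p i + 1 ∨
      kept P r s p (i + 1) = kept P r s p i + 2 ∧ Skipped P r s p (kept P r s p i + 1) := by
  set u := kept P r s p i
  have hcount : Nat.count (¬ Skipped P r s p ·) (u + 1) = i + 1 := by
    rw [Nat.count_succ, if_pos (not_skipped_kept hP i), count_kept hP]
  by_cases h : Skipped P r s p (u + 1)
  · refine Or.inr ⟨?_, h⟩
    have hcount' : Nat.count (¬ Skipped P r s p ·) (u + 2) = i + 1 := by
      rw [Nat.count_succ, if_neg (not_not.2 h), hcount]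
    rw [← hcount']
    exact Nat.nth_count (h.not_succ hP)
  · left
    rw [← hcount]
    exact Nat.nth_count h

lemma kept_add_period (hP : 1 < P) (hs : s ≤ p) (i : ℕ) :
    kept P r s p (i + (p * P - s)) = kept P r s p i + p * P := by
  set u := kept P r s p i
  have hcount_period : Nat.count (¬ Skipped P r s p ·) (p * P) = p * P - s := by
    have := Nat.count_add_count_not (Skipped P r s p) (p * P)
    rw [count_skipped_period (by omega) hs] at this
    omega
  have hcount : Nat.count (¬ Skipped P r s p ·) (u + p * P) = i + (p * P - s) := by
    rw [add_comm u, Nat.count_add, hcount_period, add_comm]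
    simp only [add_comm (p * P), skipped_add_period_iff]
    rw [count_kept hP]
  rw [← hcount]
  exact Nat.nth_count fun h => not_skipped_kept hP i ((skipped_add_period_iff u).1 h)

end Skipped

lemma Function.Surjective.apply_eq_of_card_le_succ {α β : Type*} [Fintype α] [Fintype β]
    {g : α → β} (hg : Surjective g) (hcard : Fintype.card α ≤ Fintype.card β + 1)
    {x₁ x₂ y₁ y₂ : α} (hx : x₁ ≠ x₂) (hgx : g x₁ = g x₂) (hy : y₁ ≠ y₂) (hgy : g y₁ = g y₂) :
    g y₁ = g x₁ := by
  classical
  have hsurj : Set.SurjOn g (univ.erase x₂ : Finset α) (univ : Finset β) := by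
    intro b _
    obtain ⟨z, rfl⟩ := hg b
    by_cases hz : z = x₂
    · exact ⟨x₁, by simpa using hx, by rw [hgx, hz]⟩
    · exact ⟨z, by simpa using hz, rfl⟩
  have hinj : Set.InjOn g (univ.erase x₂ : Finset α) :=
    injOn_of_surjOn_of_card_le g (fun _ _ => mem_coe.2 (mem_univ _)) hsurj <| by
      rw [card_erase_of_mem (mem_univ _), card_univ, card_univ]
      omega
  by_contra hne
  have hy₁ : y₁ ≠ x₂ := by rintro rfl; exact hne hgx.symm
  have hy₂ : y₂ ≠ x₂ := by rintro rfl; exact hne (hgy.trans hgx.symm)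
  exact hy (hinj (by simpa using hy₁) (by simpa using hy₂) hgy)

namespace CWalk

variable {n k m : ℕ} {c : Fin n → Fin n → ℝ}

lemma two_le (W : CWalk n k) : 2 ≤ n := by
  have h := Fin.val_ne_of_ne (W.step 0)
  have := (W.seq 0).isLt
  have := (W.seq 1).isLt
  omega

lemma cost_nonneg (hc : ∀ u v : Fin n, u ≠ v → 0 < c u v) (W : CWalk n k) (t : ℕ) :
    0 ≤ c (W.seq t) (W.seq (t + 1)) :=
  (hc _ _ (W.step t)).le

lemma tt_add_period (W : CWalk n k) (m : ℕ) : W.tt c m (m + k) = W.duration c :=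
  pathLength_add_period W.periodic m

lemma tt_nonneg (hc : ∀ u v : Fin n, u ≠ v → 0 < c u v) (W : CWalk n k) (i j : ℕ) :
    0 ≤ W.tt c i j :=
  sum_nonneg fun t _ => W.cost_nonneg hc t

lemma tt_le_of_forall_ne (hc : ∀ u v : Fin n, u ≠ v → 0 < c u v) (W : CWalk n k)
    {d : Fin n} {i j l : ℕ} (hbetween : ∀ t, i < t → t < j → W.seq t ≠ d) (hil : i < l)
    (hl : W.seq l = d) : W.tt c i j ≤ W.tt c i l :=
  pathLength_mono_right (W.cost_nonneg hc) <| not_lt.1 fun hlj => hbetween l hil hlj hl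

lemma RT_le_R (W : CWalk n k) (d : Fin n) : W.RT c d ≤ W.R c :=
  le_csSup ((Set.finite_range (W.RT c)).subset <| by rintro _ ⟨d', rfl⟩; exact ⟨d', rfl⟩).bddAbove
    ⟨d, rfl⟩

lemma R_nonneg (hc : ∀ u v : Fin n, u ≠ v → 0 < c u v) (W : CWalk n k) : 0 ≤ W.R c :=
  Real.sSup_nonneg <| by
    rintro _ ⟨d, rfl⟩
    exact Real.sSup_nonneg <| by
      rintro _ ⟨i, j, -, -, -, -, rfl⟩
      exact W.tt_nonneg hc i j

lemma R_le_of_forall_exists_revisit (hc : ∀ u v : Fin n, u ≠ v → 0 < c u v) (W : CWalk n k)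
    {D : ℝ} (hD : 0 ≤ D)
    (h : ∀ d i, W.seq i = d → ∃ l, i < l ∧ W.seq l = d ∧ W.tt c i l ≤ D) : W.R c ≤ D := by
  refine Real.sSup_le ?_ hD
  rintro _ ⟨d, rfl⟩
  refine Real.sSup_le ?_ hD
  rintro _ ⟨i, j, -, hi, -, hbetween, rfl⟩
  obtain ⟨l, hil, hl, hD⟩ := h d i hi
  exact (W.tt_le_of_forall_ne hc hbetween hil hl).trans hD

lemma duration_le_R_of_forall_ne (hc : ∀ u v : Fin n, u ≠ v → 0 < c u v) (W : CWalk n k)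
    (hk : 0 < k) {m : ℕ} (honce : ∀ t, m < t → t < m + k → W.seq t ≠ W.seq m) :
    W.duration c ≤ W.R c := by
  refine le_trans ?_ (W.RT_le_R (W.seq m))
  have hbdd : BddAbove {T : ℝ | ∃ i j : ℕ, i < j ∧ W.seq i = W.seq m ∧ W.seq j = W.seq m ∧
      (∀ t, i < t → t < j → W.seq t ≠ W.seq m) ∧ T = W.tt c i j} := by
    refine ⟨W.duration c, ?_⟩
    rintro _ ⟨i, j, -, hi, -, hbetween, rfl⟩
    rw [← W.tt_add_period i]
    exact W.tt_le_of_forall_ne hc hbetween (by omega) ((W.periodic i).trans hi)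
  rw [← W.tt_add_period m]
  exact le_csSup hbdd ⟨m, m + k, by omega, rfl, W.periodic m, honce, rfl⟩

theorem exists_R_le_duration_of_strictMono (hc : ∀ u v : Fin n, u ≠ v → 0 < c u v)
    (htri : ∀ u v w : Fin n, c u w ≤ c u v + c v w) (W : CWalk n m) {k : ℕ} (hk : 0 < k)
    {φ : ℕ → ℕ} (hφ : StrictMono φ) (hper : Periodic (W.seq ∘ φ) k)
    (hstep : ∀ i, W.seq (φ i) ≠ W.seq (φ (i + 1)))
    (hwin : ∀ i d, ∃ t, i < t ∧ φ t ≤ φ i + m ∧ W.seq (φ t) = d) :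
    ∃ W' : CWalk n k, W'.R c ≤ W.duration c := by
  have hcovers (d : Fin n) : ∃ i < k, W.seq (φ i) = d := by
    obtain ⟨t, -, -, ht⟩ := hwin 0 d
    exact ⟨t % k, Nat.mod_lt t hk, (hper.map_mod_nat t).trans ht⟩
  refine ⟨⟨W.seq ∘ φ, hper, hstep, hcovers⟩, ?_⟩
  refine R_le_of_forall_exists_revisit hc _ (W.tt_nonneg hc 0 m) fun d i _ => ?_
  obtain ⟨t, hit, hφt, ht⟩ := hwin i d
  refine ⟨t, hit, ht, ?_⟩
  calc pathLength c (W.seq ∘ φ) i t ≤ pathLength c W.seq (φ i) (φ t) :=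
        pathLength_comp_le htri hφ hit.le
    _ ≤ pathLength c W.seq (φ i) (φ i + m) := pathLength_mono_right (W.cost_nonneg hc) hφt
    _ = W.duration c := W.tt_add_period (φ i)

lemma two_dvd (W : CWalk 2 k) : 2 ∣ k := by
  have hper : Periodic W.seq 2 := fun i => by
    have key : ∀ x y z : Fin 2, x ≠ y → y ≠ z → z = x := by decide
    exact key _ _ _ (W.step i) (W.step (i + 1))
  by_contra hk
  have h : W.seq 1 = W.seq 0 := by
    rw [← Nat.two_dvd_ne_zero.1 hk, hper.map_mod_nat]
    simpa using W.periodic 0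
  exact W.step 0 h.symm

lemma seq_eq_of_modEq (W : CWalk n k) {x y : ℕ} (h : x ≡ y [MOD k]) :
    W.seq x = W.seq y := by
  have hper : Periodic W.seq k := W.periodic
  rw [← hper.map_mod_nat x, h, hper.map_mod_nat]

section SuccVisits

variable (W : CWalk n (n + 1))

lemma exists_repeat : ∃ a r, a < r ∧ r ≤ n ∧ W.seq a = W.seq r := by
  obtain ⟨x, y, hxy, h⟩ :=
    Fintype.exists_ne_map_eq_of_card_lt (fun z : Fin (n + 1) => W.seq z) (by simp)
  rcases lt_or_gt_of_ne (Fin.val_ne_of_ne hxy) with hlt | hlt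
  · exact ⟨x, y, hlt, Nat.lt_succ_iff.1 y.isLt, h⟩
  · exact ⟨y, x, hlt, Nat.lt_succ_iff.1 x.isLt, h.symm⟩

lemma seq_eq_of_repeat {a b x y : ℕ} (hab : a ≠ b) (ha : a ≤ n) (hb : b ≤ n)
    (hrep : W.seq a = W.seq b) (hxy : x ≠ y) (hx : x ≤ n) (hy : y ≤ n)
    (h : W.seq x = W.seq y) : W.seq x = W.seq a := by
  have hsurj : Surjective fun z : Fin (n + 1) => W.seq z := fun d => by
    obtain ⟨i, hi, rfl⟩ := W.covers d
    exact ⟨⟨i, hi⟩, rfl⟩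
  exact hsurj.apply_eq_of_card_le_succ (x₁ := ⟨a, by omega⟩) (x₂ := ⟨b, by omega⟩)
    (y₁ := ⟨x, by omega⟩) (y₂ := ⟨y, by omega⟩) (by simp) (Fin.ne_of_val_ne hab) hrep
    (Fin.ne_of_val_ne hxy) h

variable {W}

lemma seq_pred_ne_seq_succ {a r : ℕ} (har : a < r) (hrn : r ≤ n) (hrep : W.seq a = W.seq r) :
    W.seq (r - 1) ≠ W.seq (r + 1) := by
  have hn := W.two_le
  obtain ⟨y, hy, hyn, hry⟩ : ∃ y, y ≠ r - 1 ∧ y ≤ n ∧ W.seq (r + 1) = W.seq y := by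
    rcases hrn.lt_or_eq with hlt | rfl
    · exact ⟨r + 1, by omega, hlt, rfl⟩
    · exact ⟨0, by omega, by omega, by simpa using W.periodic 0⟩
  intro h
  have := W.seq_eq_of_repeat (ne_of_lt har) (by omega) hrn hrep (Ne.symm hy) (by omega) hyn
    (h.trans hry)
  exact W.step (r - 1) (by rw [this, hrep, Nat.sub_add_cancel (by omega)])

lemma seq_ne_seq_pred {a r : ℕ} (har : a < r) (hrn : r ≤ n) (hrep : W.seq a = W.seq r)
    {t : ℕ} (ht : r - 1 < t) (ht' : t < r - 1 + (n + 1)) : W.seq t ≠ W.seq (r - 1) := by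
  obtain ⟨x, hx, hxn, htx⟩ : ∃ x, x ≠ r - 1 ∧ x ≤ n ∧ W.seq t = W.seq x := by
    by_cases htn : t ≤ n
    · exact ⟨t, by omega, htn, rfl⟩
    · exact ⟨t - (n + 1), by omega, by omega, by rw [← W.periodic (t - (n + 1))]; congr 1; omega⟩
  intro h
  have := W.seq_eq_of_repeat (ne_of_lt har) (by omega) hrn hrep hx hxn (by omega) (htx.symm.trans h)
  exact W.step (r - 1) (by rw [Nat.sub_add_cancel (by omega), ← h, htx, this, hrep])

lemma exists_visit_not_modEq {a r : ℕ} (har : a < r) (hrn : r ≤ n) (hrep : W.seq a = W.seq r)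
    (x : ℕ) (d : Fin n) :
    ∃ u, x < u ∧ u ≤ x + (n + 1) ∧ ¬ u ≡ r [MOD n + 1] ∧ W.seq u = d := by
  obtain ⟨ρ, hρn, hρr, hρd⟩ : ∃ ρ, ρ ≤ n ∧ ρ ≠ r ∧ W.seq ρ = d := by
    obtain ⟨i, hi, hid⟩ := W.covers d
    by_cases hir : i = r
    · exact ⟨a, by omega, by omega, by rw [hrep, ← hir, hid]⟩
    · exact ⟨i, by omega, hir, hid⟩
  obtain ⟨j, hxj, hjx⟩ : ∃ j, x < ρ + (n + 1) * j ∧ ρ + (n + 1) * j ≤ x + (n + 1) := by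
    have h₁ := Nat.div_add_mod x (n + 1)
    have h₂ := Nat.mod_lt x (n.add_one_pos)
    by_cases h : x < ρ + (n + 1) * (x / (n + 1))
    · exact ⟨x / (n + 1), h, by omega⟩
    · exact ⟨x / (n + 1) + 1, by rw [mul_add]; omega, by rw [mul_add]; omega⟩
  have hmod : ρ + (n + 1) * j ≡ ρ [MOD n + 1] := by
    rw [Nat.ModEq, Nat.add_mul_mod_self_left]
  refine ⟨ρ + (n + 1) * j, hxj, hjx, fun h => hρr ?_, (W.seq_eq_of_modEq hmod).trans hρd⟩
  have := hmod.symm.trans h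
  rwa [Nat.ModEq, Nat.mod_eq_of_lt (by omega), Nat.mod_eq_of_lt (by omega)] at this

theorem exists_R_le_of_succ (hc : ∀ u v : Fin n, u ≠ v → 0 < c u v)
    (htri : ∀ u v w : Fin n, c u w ≤ c u v + c v w) (W : CWalk n (n + 1)) {p q : ℕ}
    (hp : 0 < p) (hqp : q ≤ p) : ∃ W' : CWalk n (n * p + q), W'.R c ≤ W.R c := by
  obtain ⟨a, r, har, hrn, hrep⟩ := W.exists_repeat
  have hP : 1 < n + 1 := by have := W.two_le; omega
  have hk : n * p + q = p * (n + 1) - (p - q) := by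
    rw [mul_add, mul_one, mul_comm]; omega
  set φ := kept (n + 1) r (p - q) p
  have hφ : StrictMono φ := kept_strictMono hP
  have hper : Periodic (W.seq ∘ φ) (n * p + q) := fun i => by
    simp only [comp_apply, hk, φ, kept_add_period hP (Nat.sub_le p q)]
    exact (Periodic.nat_mul W.periodic p) _
  have hstep (i : ℕ) : W.seq (φ i) ≠ W.seq (φ (i + 1)) := by
    have hsucc : φ (i + 1) = φ i + 1 ∨
        φ (i + 1) = φ i + 2 ∧ Skipped (n + 1) r (p - q) p (φ i + 1) := kept_succ hP i
    rcases hsucc with h | ⟨h, hskip, -⟩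
    · rw [h]; exact W.step _
    · have h₁ : φ i ≡ r - 1 [MOD n + 1] :=
        Nat.ModEq.add_right_cancel' 1 (by rwa [Nat.sub_add_cancel (by omega)])
      have h₂ : φ i + 2 ≡ r + 1 [MOD n + 1] := Nat.ModEq.add_right 1 hskip
      rw [h, W.seq_eq_of_modEq h₁, W.seq_eq_of_modEq h₂]
      exact seq_pred_ne_seq_succ har hrn hrep
  have hwin (i : ℕ) (d : Fin n) : ∃ t, i < t ∧ φ t ≤ φ i + (n + 1) ∧ W.seq (φ t) = d := by
    obtain ⟨u, hu, hu', hur, hud⟩ := exists_visit_not_modEq har hrn hrep (φ i) d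
    have hφu : φ (Nat.count (¬ Skipped (n + 1) r (p - q) p ·) u) = u :=
      Nat.nth_count fun h => hur h.1
    refine ⟨Nat.count (¬ Skipped (n + 1) r (p - q) p ·) u, hφ.lt_iff_lt.1 ?_, ?_, ?_⟩ <;>
      rwa [hφu]
  obtain ⟨W', hW'⟩ := W.exists_R_le_duration_of_strictMono hc htri
    (Nat.add_pos_left (Nat.mul_pos (by omega) hp) q)
    hφ hper hstep hwin
  exact ⟨W', hW'.trans <| W.duration_le_R_of_forall_ne hc n.succ_pos (m := r - 1)
    fun _ ht ht' => seq_ne_seq_pred har hrn hrep ht ht'⟩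

end SuccVisits

end CWalk

/-- The walk `0, 1, …, n - 1, 1`, repeated. -/
lemma nonempty_cwalk_succ {n : ℕ} (hn : 3 ≤ n) : Nonempty (CWalk n (n + 1)) := by
  let f : ℕ → Fin n := fun j => if h : j < n then ⟨j, h⟩ else ⟨1, by omega⟩
  refine ⟨⟨fun i => f (i % (n + 1)), fun i => by simp, fun i => ?_, fun d => ⟨d, by omega, ?_⟩⟩⟩
  · have hlt := Nat.mod_lt i n.add_one_pos
    have hsucc : (i + 1) % (n + 1) = if i % (n + 1) = n then 0 else i % (n + 1) + 1 := by
      rw [Nat.add_mod, Nat.one_mod_eq_one.2 (by omega)]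
      split_ifs with h
      · rw [h, Nat.mod_self]
      · exact Nat.mod_eq_of_lt (by omega)
    rw [hsucc]
    simp only [f]
    split_ifs <;> simp [Fin.ext_iff] <;> omega
  · simp [f, Nat.mod_eq_of_lt (show d.val < n + 1 by omega)]

lemma Rstar_nonneg {n k : ℕ} {c : Fin n → Fin n → ℝ} (hc : ∀ u v : Fin n, u ≠ v → 0 < c u v) :
    0 ≤ Rstar n c k :=
  Real.sInf_nonneg <| by
    rintro _ ⟨W, rfl⟩
    exact W.R_nonneg hc

lemma Rstar_eq_zero_of_isEmpty {n k : ℕ} (c : Fin n → Fin n → ℝ) [IsEmpty (CWalk n k)] :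
    Rstar n c k = 0 := by
  simp [Rstar]

lemma Rstar_le_Rstar_of_forall_exists {n k m : ℕ} {c : Fin n → Fin n → ℝ}
    (hc : ∀ u v : Fin n, u ≠ v → 0 < c u v) [Nonempty (CWalk n m)]
    (h : ∀ W : CWalk n m, ∃ W' : CWalk n k, W'.R c ≤ W.R c) : Rstar n c k ≤ Rstar n c m := by
  refine le_csInf ?_ ?_
  · obtain ⟨W⟩ := ‹Nonempty (CWalk n m)›
    exact ⟨_, W, rfl⟩
  · have hbdd : BddBelow {T : ℝ | ∃ W : CWalk n k, T = W.R c} :=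
      ⟨0, by rintro _ ⟨W, rfl⟩; exact W.R_nonneg hc⟩
    rintro _ ⟨W, rfl⟩
    obtain ⟨W', hW'⟩ := h W
    exact (csInf_le hbdd ⟨W', rfl⟩).trans hW'

theorem Rstar_le_Rstar_succ_n_general
    (n k : ℕ) (hk : n ^ 2 - n < k) (hnd : ¬ n ∣ k)
    (c : Fin n → Fin n → ℝ)
    (hc : ∀ u v : Fin n, u ≠ v → 0 < c u v)
    (htri : ∀ u v w : Fin n, c u w ≤ c u v + c v w) :
    Rstar n c k ≤ Rstar n c (n + 1) := by
  rcases isEmpty_or_nonempty (CWalk n k) with hempty | ⟨⟨W⟩⟩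
  · rw [Rstar_eq_zero_of_isEmpty]
    exact Rstar_nonneg hc
  have hn : 3 ≤ n := by
    rcases W.two_le.eq_or_lt with rfl | h
    · exact absurd W.two_dvd hnd
    · exact h
  have := nonempty_cwalk_succ hn
  have hp : n - 1 ≤ k / n := by
    rw [Nat.le_div_iff_mul_le (by omega), Nat.sub_mul, one_mul, ← sq]
    omega
  have hq : k % n < n := Nat.mod_lt k (by omega)
  refine Rstar_le_Rstar_of_forall_exists hc fun W₀ => ?_
  rw [← Nat.div_add_mod k n]
  exact W₀.exists_R_le_of_succ hc htri (p := k / n) (q := k % n) (by omega) (by omega)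

/-- if `k > n² - n` and `k` is not a multiple of `n`, then
`R*(k) ≤ R*(n+1)`. -/
theorem Rstar_le_Rstar_succ_n
    (n k : ℕ) (hn : 2 ≤ n) (hk : n ^ 2 - n < k) (hnd : ¬ n ∣ k)
    (c : Fin n → Fin n → ℝ)
    (hc : ∀ u v : Fin n, u ≠ v → 0 < c u v)
    (htri : ∀ u v w : Fin n, c u w ≤ c u v + c v w) :
    Rstar n c k ≤ Rstar n c (n + 1) :=
  Rstar_le_Rstar_succ_n_general n k hk hnd c hc htri
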